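/- arXiv:1205.3803 — 2 statements merged into one kernel-verified Lean document; each statement's English description precedes it below -/
import Mathlib

section
/- Composition of substitutions is associative: σ ∘ (τ ∘ δ) = (σ ∘ τ) ∘ δ, where σ ∘ τ is defined by x ↦ σ(x)[τ]. -/
namespace EJ

/-- Justification terms Tm(C): variables, constants, application and sum. -/
inductive Tm : Type
  | var : ℕ → Tm
  | const : ℕ → Tm
  | app : Tm → Tm → Tm
  | plus : Tm → Tm → Tm
  deriving DecidableEq

/-- Formulas Fm(C,D) of ∈_J-Logic. -/
inductive Fm : Type
  | pvar : ℕ → Fm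
  | pconst : ℕ → Fm
  | imp : Fm → Fm → Fm
  | neg : Fm → Fm
  | ideq : Fm → Fm → Fm            -- φ ≡ ψ
  | ref : Fm → Fm → Fm             -- φ < ψ
  | teq : Tm → Tm → Fm             -- s ≡ t
  | tle : Tm → Tm → Fm             -- s ≤ t
  | isTrue : Fm → Fm               -- φ : true
  | isFalse : Fm → Fm              -- φ : false
  | box : Fm → Fm                  -- □φ
  | just : Fm → Tm → Fm            -- φ : t
  | fAll : ℕ → Fm → Fm             -- ∀x.φ
  | jAll : ℕ → Fm → Fm             -- ⋀u.φ
  deriving DecidableEq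

/-- variables of a term -/
def Tm.vars : Tm → Finset ℕ
  | .var u => {u}
  | .const _ => ∅
  | .app s t => s.vars ∪ t.vars
  | .plus s t => s.vars ∪ t.vars

/-- constants of a term -/
def Tm.consts : Tm → Finset ℕ
  | .var _ => ∅
  | .const c => {c}
  | .app s t => s.consts ∪ t.consts
  | .plus s t => s.consts ∪ t.consts

/-- free propositional variables -/
def Fm.fvarP : Fm → Finset ℕ
  | .pvar x => {x}
  | .pconst _ => ∅
  | .imp φ ψ => φ.fvarP ∪ ψ.fvarP
  | .neg φ => φ.fvarP
  | .ideq φ ψ => φ.fvarP ∪ ψ.fvarP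
  | .ref φ ψ => φ.fvarP ∪ ψ.fvarP
  | .teq _ _ => ∅
  | .tle _ _ => ∅
  | .isTrue φ => φ.fvarP
  | .isFalse φ => φ.fvarP
  | .box φ => φ.fvarP
  | .just φ _ => φ.fvarP
  | .fAll x φ => φ.fvarP.erase x
  | .jAll _ φ => φ.fvarP

/-- free justification variables -/
def Fm.fvarJ : Fm → Finset ℕ
  | .pvar _ => ∅
  | .pconst _ => ∅
  | .imp φ ψ => φ.fvarJ ∪ ψ.fvarJ
  | .neg φ => φ.fvarJ
  | .ideq φ ψ => φ.fvarJ ∪ ψ.fvarJ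
  | .ref φ ψ => φ.fvarJ ∪ ψ.fvarJ
  | .teq s t => s.vars ∪ t.vars
  | .tle s t => s.vars ∪ t.vars
  | .isTrue φ => φ.fvarJ
  | .isFalse φ => φ.fvarJ
  | .box φ => φ.fvarJ
  | .just φ t => φ.fvarJ ∪ t.vars
  | .fAll _ φ => φ.fvarJ
  | .jAll u φ => φ.fvarJ.erase u

/-- propositional constants occurring in a formula -/
def Fm.pconsts : Fm → Finset ℕ
  | .pvar _ => ∅
  | .pconst d => {d}
  | .imp φ ψ => φ.pconsts ∪ ψ.pconsts
  | .neg φ => φ.pconsts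
  | .ideq φ ψ => φ.pconsts ∪ ψ.pconsts
  | .ref φ ψ => φ.pconsts ∪ ψ.pconsts
  | .teq _ _ => ∅
  | .tle _ _ => ∅
  | .isTrue φ => φ.pconsts
  | .isFalse φ => φ.pconsts
  | .box φ => φ.pconsts
  | .just φ _ => φ.pconsts
  | .fAll _ φ => φ.pconsts
  | .jAll _ φ => φ.pconsts

/-- justification constants occurring in a formula -/
def Fm.jconsts : Fm → Finset ℕ
  | .pvar _ => ∅
  | .pconst _ => ∅
  | .imp φ ψ => φ.jconsts ∪ ψ.jconsts
  | .neg φ => φ.jconsts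
  | .ideq φ ψ => φ.jconsts ∪ ψ.jconsts
  | .ref φ ψ => φ.jconsts ∪ ψ.jconsts
  | .teq s t => s.consts ∪ t.consts
  | .tle s t => s.consts ∪ t.consts
  | .isTrue φ => φ.jconsts
  | .isFalse φ => φ.jconsts
  | .box φ => φ.jconsts
  | .just φ t => φ.jconsts ∪ t.consts
  | .fAll _ φ => φ.jconsts
  | .jAll _ φ => φ.jconsts

/-- all propositional variables (free or bound) -/
def Fm.varP : Fm → Finset ℕ
  | .pvar x => {x}
  | .pconst _ => ∅
  | .imp φ ψ => φ.varP ∪ ψ.varP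
  | .neg φ => φ.varP
  | .ideq φ ψ => φ.varP ∪ ψ.varP
  | .ref φ ψ => φ.varP ∪ ψ.varP
  | .teq _ _ => ∅
  | .tle _ _ => ∅
  | .isTrue φ => φ.varP
  | .isFalse φ => φ.varP
  | .box φ => φ.varP
  | .just φ _ => φ.varP
  | .fAll x φ => insert x φ.varP
  | .jAll _ φ => φ.varP

/-- all justification variables (free or bound) -/
def Fm.varJ : Fm → Finset ℕ
  | .pvar _ => ∅
  | .pconst _ => ∅
  | .imp φ ψ => φ.varJ ∪ ψ.varJ
  | .neg φ => φ.varJ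
  | .ideq φ ψ => φ.varJ ∪ ψ.varJ
  | .ref φ ψ => φ.varJ ∪ ψ.varJ
  | .teq s t => s.vars ∪ t.vars
  | .tle s t => s.vars ∪ t.vars
  | .isTrue φ => φ.varJ
  | .isFalse φ => φ.varJ
  | .box φ => φ.varJ
  | .just φ t => φ.varJ ∪ t.vars
  | .fAll _ φ => φ.varJ
  | .jAll u φ => insert u φ.varJ

/-- A substitution: maps propositional variables/constants to formulas and
justification variables/constants to terms. -/
structure Subst where
  pv : ℕ → Fm
  jv : ℕ → Tm
  pc : ℕ → Fm
  jc : ℕ → Tm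

/-- the identity substitution ε -/
def Subst.id : Subst := ⟨Fm.pvar, Tm.var, Fm.pconst, Tm.const⟩

def Subst.updP (σ : Subst) (x : ℕ) (e : Fm) : Subst :=
  { σ with pv := Function.update σ.pv x e }

def Subst.updJ (σ : Subst) (u : ℕ) (t : Tm) : Subst :=
  { σ with jv := Function.update σ.jv u t }

def Subst.updPC (σ : Subst) (d : ℕ) (e : Fm) : Subst :=
  { σ with pc := Function.update σ.pc d e }

def Subst.updJC (σ : Subst) (c : ℕ) (t : Tm) : Subst :=
  { σ with jc := Function.update σ.jc c t }

/-- a substitution restricted to variables (identity on constants) -/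
def Subst.IdOnConsts (σ : Subst) : Prop := σ.pc = Fm.pconst ∧ σ.jc = Tm.const

/-- substitution applied to a term -/
def Tm.subst : Tm → Subst → Tm
  | .var u, σ => σ.jv u
  | .const c, σ => σ.jc c
  | .app s t, σ => .app (s.subst σ) (t.subst σ)
  | .plus s t, σ => .plus (s.subst σ) (t.subst σ)

/-- the propositional variable forced by σ w.r.t. a quantified formula:
the least variable greater than all free propositional variables of the images
under σ of the free symbols of the formula -/
def pForced (σ : Subst) (φ : Fm) : ℕ :=
  ((φ.fvarP.biUnion fun w => (σ.pv w).fvarP) ∪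
   (φ.pconsts.biUnion fun w => (σ.pc w).fvarP)).sup Nat.succ

/-- the justification variable forced by σ w.r.t. a quantified formula -/
def jForced (σ : Subst) (φ : Fm) : ℕ :=
  ((φ.fvarP.biUnion fun w => (σ.pv w).fvarJ) ∪
   (φ.pconsts.biUnion fun w => (σ.pc w).fvarJ) ∪
   (φ.fvarJ.biUnion fun w => (σ.jv w).vars) ∪
   (φ.jconsts.biUnion fun w => (σ.jc w).vars)).sup Nat.succ

/-- capture-avoiding substitution on formulas, renaming bound variables
canonically to the forced fresh variable -/
def Fm.subst : Fm → Subst → Fm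
  | .pvar x, σ => σ.pv x
  | .pconst d, σ => σ.pc d
  | .imp φ ψ, σ => .imp (φ.subst σ) (ψ.subst σ)
  | .neg φ, σ => .neg (φ.subst σ)
  | .ideq φ ψ, σ => .ideq (φ.subst σ) (ψ.subst σ)
  | .ref φ ψ, σ => .ref (φ.subst σ) (ψ.subst σ)
  | .teq s t, σ => .teq (s.subst σ) (t.subst σ)
  | .tle s t, σ => .tle (s.subst σ) (t.subst σ)
  | .isTrue φ, σ => .isTrue (φ.subst σ)
  | .isFalse φ, σ => .isFalse (φ.subst σ)
  | .box φ, σ => .box (φ.subst σ)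
  | .just φ t, σ => .just (φ.subst σ) (t.subst σ)
  | .fAll x φ, σ =>
      let y := pForced σ (.fAll x φ)
      .fAll y (φ.subst (σ.updP x (.pvar y)))
  | .jAll u φ, σ =>
      let v := jForced σ (.jAll u φ)
      .jAll v (φ.subst (σ.updJ u (.var v)))

/-- single-point substitution [x := ψ] for a propositional variable -/
def Fm.subst1P (φ : Fm) (x : ℕ) (ψ : Fm) : Fm := φ.subst (Subst.id.updP x ψ)

/-- single-point substitution [u := t] for a justification variable -/
def Fm.subst1J (φ : Fm) (u : ℕ) (t : Tm) : Fm := φ.subst (Subst.id.updJ u t)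

/-- composition of substitutions: (σ ∘ τ)(x) = σ(x)[τ] -/
def Subst.comp (σ τ : Subst) : Subst :=
  ⟨fun x => (σ.pv x).subst τ, fun u => (σ.jv u).subst τ,
   fun d => (σ.pc d).subst τ, fun c => (σ.jc c).subst τ⟩

/-- alpha-congruence: the smallest equivalence relation compatible with all
connectives and identifying formulas differing only in bound variables -/
inductive Alpha : Fm → Fm → Prop
  | refl (φ) : Alpha φ φ
  | symm : Alpha φ ψ → Alpha ψ φ
  | trans : Alpha φ ψ → Alpha ψ χ → Alpha φ χ
  | imp : Alpha φ₁ ψ₁ → Alpha φ₂ ψ₂ → Alpha (.imp φ₁ φ₂) (.imp ψ₁ ψ₂)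
  | ideq : Alpha φ₁ ψ₁ → Alpha φ₂ ψ₂ → Alpha (.ideq φ₁ φ₂) (.ideq ψ₁ ψ₂)
  | ref : Alpha φ₁ ψ₁ → Alpha φ₂ ψ₂ → Alpha (.ref φ₁ φ₂) (.ref ψ₁ ψ₂)
  | neg : Alpha φ ψ → Alpha (.neg φ) (.neg ψ)
  | isTrue : Alpha φ ψ → Alpha (.isTrue φ) (.isTrue ψ)
  | isFalse : Alpha φ ψ → Alpha (.isFalse φ) (.isFalse ψ)
  | box : Alpha φ ψ → Alpha (.box φ) (.box ψ)
  | just (t) : Alpha φ ψ → Alpha (.just φ t) (.just ψ t)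
  | jAll : Alpha φ (ψ.subst1J v (.var u)) → (u ≠ v → u ∉ ψ.fvarJ) →
      Alpha (.jAll u φ) (.jAll v ψ)
  | fAll : Alpha φ (ψ.subst1P y (.pvar x)) → (x ≠ y → x ∉ ψ.fvarP) →
      Alpha (.fAll x φ) (.fAll y ψ)

/-- syntactical reference φ ≺ ψ -/
def Sref (φ ψ : Fm) : Prop :=
  ∃ (x : ℕ) (ψ' : Fm), ψ' ≠ .pvar x ∧ x ∈ ψ'.fvarP ∧ Alpha (ψ'.subst1P x φ) ψ

/-! ## derived connectives -/

def Fm.and (φ ψ : Fm) : Fm := .neg (.imp φ (.neg ψ))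
def Fm.iff (φ ψ : Fm) : Fm := (Fm.imp φ ψ).and (Fm.imp ψ φ)
def Fm.jEx (u : ℕ) (φ : Fm) : Fm := .neg (.jAll u (.neg φ))
def Fm.fEx (x : ℕ) (φ : Fm) : Fm := .neg (.fAll x (.neg φ))

/-- conjunction of a list of formulas -/
def bigAnd : List Fm → Fm
  | [] => .imp (.pvar 0) (.pvar 0)
  | [φ] => φ
  | φ :: ψ :: rest => Fm.and φ (bigAnd (ψ :: rest))

/-- the formula σ ≡_φ σ' : conjunction of σ(x) ≡ σ'(x) over the free variables
of φ (in the order of the underlying well-orderings) -/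
def eqOnF (σ σ' : Subst) (φ : Fm) : Fm :=
  bigAnd (((φ.fvarP.sort (· ≤ ·)).map fun x => Fm.ideq (σ.pv x) (σ'.pv x)) ++
          ((φ.fvarJ.sort (· ≤ ·)).map fun u => Fm.teq (σ.jv u) (σ'.jv u)))

/-- the formula σ ≡_t σ' for a term t -/
def eqOnT (σ σ' : Subst) (t : Tm) : Fm :=
  bigAnd ((t.vars.sort (· ≤ ·)).map fun u => Fm.teq (σ.jv u) (σ'.jv u))

/-! ## the Hilbert system Ax -/

/-- boolean evaluation treating formulas other than →, ¬ as atoms -/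
def Fm.evalB (v : Fm → Bool) : Fm → Bool
  | .imp φ ψ => !(φ.evalB v) || ψ.evalB v
  | .neg φ => !(φ.evalB v)
  | φ => v φ

/-- propositional tautology (a sufficient set of tautologies) -/
def Taut (φ : Fm) : Prop := ∀ v : Fm → Bool, φ.evalB v = true

/-- the axiom system Ax of ∈_J-Logic (Definition 3.1) -/
inductive Ax : Fm → Prop
  | taut : Taut φ → Ax φ
  | tarski (φ) : Ax ((Fm.isTrue φ).iff φ)
  | falsity (φ) : Ax ((Fm.isFalse φ).iff (.neg φ))
  | appl (φ ψ s t) :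
      Ax (.imp (.just (.imp φ ψ) s) (.imp (.just φ t) (.just ψ (.app s t))))
  | weak1 (φ s t) : Ax (.imp (.just φ s) (.just φ (.plus s t)))
  | weak2 (φ s t) : Ax (.imp (.just φ t) (.just φ (.plus s t)))
  | necJust (φ u) : u ∉ φ.fvarJ →
      Ax ((Fm.box φ).iff (Fm.jEx u (.just φ (.var u))))
  | boxT (φ) : Ax (.imp (.box φ) φ)
  | refAx : Sref φ ψ → Ax (.ref φ ψ)
  | refTrans (φ ψ χ) : Ax (.imp (.ref φ ψ) (.imp (.ref ψ χ) (.ref φ χ)))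
  | alphaAx : Alpha φ ψ → Ax (.ideq φ ψ)
  | eqImp (φ ψ) : Ax (.imp (.ideq φ ψ) (.imp φ ψ))
  | substP (σ σ' φ) : Ax (.imp (eqOnF σ σ' φ) (.ideq (φ.subst σ) (φ.subst σ')))
  | jExInst (φ u t) : Ax (.imp (φ.subst1J u t) (Fm.jEx u φ))
  | jAllInst (φ u t) : Ax (.imp (.jAll u φ) (φ.subst1J u t))
  | jDistrib (φ ψ u) :
      Ax (.imp (.jAll u (.imp ψ φ)) (.imp (.jAll u ψ) (.jAll u φ)))
  | jVac (φ ψ u) : u ∉ ψ.fvarJ →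
      Ax (.imp (.jAll u (.imp ψ φ)) (.imp ψ (.jAll u φ)))
  | pExInst (φ x ψ) : Ax (.imp (φ.subst1P x ψ) (Fm.fEx x φ))
  | pAllInst (φ x ψ) : Ax (.imp (.fAll x φ) (φ.subst1P x ψ))
  | pDistrib (φ ψ x) :
      Ax (.imp (.fAll x (.imp ψ φ)) (.imp (.fAll x ψ) (.fAll x φ)))
  | pVac (φ ψ x) : x ∉ ψ.fvarP →
      Ax (.imp (.fAll x (.imp ψ φ)) (.imp ψ (.fAll x φ)))
  | leDef (s t x) :
      Ax ((Fm.tle s t).iff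
        (.fAll x (.imp (.just (.pvar x) s) (.just (.pvar x) t))))
  | ext (s t) : Ax ((Fm.teq s t).iff ((Fm.tle s t).and (Fm.tle t s)))
  | substT (σ σ' t) : Ax (.imp (eqOnT σ σ' t) (.teq (t.subst σ) (t.subst σ')))
  | genJ : Ax φ → u ∈ φ.fvarJ → Ax (.jAll u φ)
  | genP : Ax φ → x ∈ φ.fvarP → Ax (.fAll x φ)

/-- derivability from Φ in the Hilbert system Ax with Modus Ponens -/
inductive Deriv (Φ : Set Fm) : Fm → Prop
  | hyp : φ ∈ Φ → Deriv Φ φ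
  | ax : Ax φ → Deriv Φ φ
  | mp : Deriv Φ (.imp φ ψ) → Deriv Φ φ → Deriv Φ ψ

def Consistent (Φ : Set Fm) : Prop := ¬ ∃ φ, Deriv Φ φ ∧ Deriv Φ (.neg φ)

def MaxConsistent (Φ : Set Fm) : Prop :=
  Consistent Φ ∧ ∀ ψ, ψ ∉ Φ → ¬ Consistent (insert ψ Φ)

/-- Henkin set (Definition 4.4) -/
def Henkin (Φ : Set Fm) : Prop :=
  MaxConsistent Φ ∧
  (∀ u φ, Deriv Φ (.jAll u φ) ↔ ∀ c : ℕ, Deriv Φ (φ.subst1J u (.const c))) ∧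
  (∀ x φ, Deriv Φ (.fAll x φ) ↔ ∀ d : ℕ, Deriv Φ (φ.subst1P x (.pconst d)))

/-! ## semantics -/

/-- an assignment of propositions to propositional variables and indexes to
justification variables -/
structure Assign (P I : Type) where
  gp : ℕ → P
  gj : ℕ → I

def Assign.updP {P I : Type} (γ : Assign P I) (x : ℕ) (m : P) : Assign P I :=
  ⟨Function.update γ.gp x m, γ.gj⟩

def Assign.updJ {P I : Type} (γ : Assign P I) (u : ℕ) (l : I) : Assign P I :=
  ⟨γ.gp, Function.update γ.gj u l⟩

/-- a model of ∈_J-Logic (Definition 4.1) -/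
structure JModel where
  P : Type                                  -- the propositional universe M
  I : Type                                  -- the set L of indexes
  TRUE : Set P
  FALSE : Set P
  NEC : Set P
  REASON : I → Set P
  ref : P → P → Prop                        -- the reference relation <^M
  plusI : I → I → I
  dotI : I → I → I
  leI : I → I → Prop
  G : Fm → Assign P I → P                   -- Gamma-function on formulas
  GT : Tm → Assign P I → I                  -- Gamma-function on terms
  cover : TRUE ∪ FALSE = Set.univ
  disj : TRUE ∩ FALSE = ∅
  nec_sub : NEC ⊆ TRUE
  nec_union : NEC = ⋃ l, REASON l
  le_iso : ∀ l k, leI l k ↔ REASON l ⊆ REASON k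
  reason_inj : Function.Injective REASON
  ref_trans : Transitive ref
  -- structure conditions
  ep : ∀ x γ, G (.pvar x) γ = γ.gp x
  epT : ∀ u γ, GT (.var u) γ = γ.gj u
  cp : ∀ φ γ γ', (∀ x ∈ Fm.fvarP φ, γ.gp x = Assign.gp γ' x) →
      (∀ u ∈ Fm.fvarJ φ, γ.gj u = Assign.gj γ' u) → G φ γ = G φ γ'
  cpT : ∀ t γ γ', (∀ u ∈ Tm.vars t, γ.gj u = Assign.gj γ' u) → GT t γ = GT t γ'
  sp : ∀ φ (σ : Subst) γ, σ.IdOnConsts →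
      G (φ.subst σ) γ = G φ ⟨fun x => G (σ.pv x) γ, fun u => GT (σ.jv u) γ⟩
  spT : ∀ t (σ : Subst) γ, σ.IdOnConsts →
      GT (t.subst σ) γ = GT t ⟨fun x => G (σ.pv x) γ, fun u => GT (σ.jv u) γ⟩
  rp : ∀ φ ψ γ, Sref φ ψ → ref (G φ γ) (G ψ γ)
  hp_plus : ∀ s t γ, GT (.plus s t) γ = plusI (GT s γ) (GT t γ)
  hp_dot : ∀ s t γ, GT (.app s t) γ = dotI (GT s γ) (GT t γ)
  -- truth conditions
  t_imp : ∀ φ ψ γ, (G (.imp φ ψ) γ ∈ TRUE ↔ (G φ γ ∈ FALSE ∨ G ψ γ ∈ TRUE))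
  t_neg : ∀ φ γ, (G (.neg φ) γ ∈ TRUE ↔ G φ γ ∉ TRUE)
  t_true : ∀ φ γ, (G (.isTrue φ) γ ∈ TRUE ↔ G φ γ ∈ TRUE)
  t_false : ∀ φ γ, (G (.isFalse φ) γ ∈ TRUE ↔ G φ γ ∈ FALSE)
  t_ideq : ∀ φ ψ γ, (G (.ideq φ ψ) γ ∈ TRUE ↔ G φ γ = G ψ γ)
  t_ref : ∀ φ ψ γ, (G (.ref φ ψ) γ ∈ TRUE ↔ ref (G φ γ) (G ψ γ))
  t_teq : ∀ s t γ, (G (.teq s t) γ ∈ TRUE ↔ GT s γ = GT t γ)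
  t_tle : ∀ s t γ, (G (.tle s t) γ ∈ TRUE ↔ leI (GT s γ) (GT t γ))
  t_box : ∀ φ γ, (G (.box φ) γ ∈ TRUE ↔ G φ γ ∈ NEC)
  t_just : ∀ φ t γ, (G (.just φ t) γ ∈ TRUE ↔ G φ γ ∈ REASON (GT t γ))
  t_app : ∀ φ ψ s t γ, G (.imp φ ψ) γ ∈ REASON (GT s γ) →
      G φ γ ∈ REASON (GT t γ) → G ψ γ ∈ REASON (GT (.app s t) γ)
  t_plusJ : ∀ φ s t γ, G φ γ ∈ REASON (GT s γ) ∪ REASON (GT t γ) →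
      G φ γ ∈ REASON (GT (.plus s t) γ)
  t_jAll : ∀ u φ γ, (G (.jAll u φ) γ ∈ TRUE ↔ ∀ l, G φ (γ.updJ u l) ∈ TRUE)
  t_fAll : ∀ x φ γ, (G (.fAll x φ) γ ∈ TRUE ↔ ∀ m, G φ (γ.updP x m) ∈ TRUE)

/-- satisfaction -/
def JModel.Sat (M : JModel) (γ : Assign M.P M.I) (φ : Fm) : Prop :=
  M.G φ γ ∈ M.TRUE

/-- logical consequence over all models -/
def Conseq (Φ : Set Fm) (φ : Fm) : Prop :=
  ∀ (M : JModel) (γ : Assign M.P M.I), (∀ ψ ∈ Φ, M.Sat γ ψ) → M.Sat γ φ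

/-! ## S4 extensions -/

/-- the axioms of Ax + (4) -/
inductive Ax4 : Fm → Prop
  | base : Ax φ → Ax4 φ
  | four (φ) : Ax4 (.imp (.box φ) (.box (.box φ)))

/-- derivability in Ax + (4) + (AxNec): MP plus Axiom Necessitation -/
inductive Deriv4 (Φ : Set Fm) : Fm → Prop
  | hyp : φ ∈ Φ → Deriv4 Φ φ
  | ax : Ax4 φ → Deriv4 Φ φ
  | axnec : Ax4 φ → Deriv4 Φ (.box φ)
  | mp : Deriv4 Φ (.imp φ ψ) → Deriv4 Φ φ → Deriv4 Φ ψ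

/-- truth condition (4) -/
def Cond4 (M : JModel) : Prop :=
  ∀ φ γ, M.Sat γ (.box φ) → M.Sat γ (.box (.box φ))

/-- truth condition (AxNec) -/
def CondAxNec (M : JModel) : Prop :=
  ∀ φ γ, Ax4 φ → M.Sat γ (.box φ)

/-! ## basic modal language and S4 -/

inductive MFm : Type
  | var : ℕ → MFm
  | imp : MFm → MFm → MFm
  | neg : MFm → MFm
  | box : MFm → MFm
  deriving DecidableEq

def MFm.toFm : MFm → Fm
  | .var x => .pvar x
  | .imp a b => .imp a.toFm b.toFm
  | .neg a => .neg a.toFm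
  | .box a => .box a.toFm

def MFm.evalB (v : MFm → Bool) : MFm → Bool
  | .imp a b => !(a.evalB v) || b.evalB v
  | .neg a => !(a.evalB v)
  | a => v a

def MTaut (a : MFm) : Prop := ∀ v, a.evalB v = true

/-- the modal logic S4 -/
inductive S4 : MFm → Prop
  | taut : MTaut a → S4 a
  | axK (a b) : S4 (.imp (.box (.imp a b)) (.imp (.box a) (.box b)))
  | axT (a) : S4 (.imp (.box a) a)
  | ax4 (a) : S4 (.imp (.box a) (.box (.box a)))
  | mp : S4 (.imp a b) → S4 a → S4 b
  | nec : S4 a → S4 (.box a)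

/-- an S4 frame: reflexive and transitive accessibility -/
structure S4Frame where
  W : Type
  R : W → W → Prop
  refl : Reflexive R
  trans : Transitive R

/-- Kripke satisfaction -/
def KSat (F : S4Frame) (g : F.W → ℕ → Prop) : F.W → MFm → Prop
  | w, .var x => g w x
  | w, .imp a b => KSat F g w a → KSat F g w b
  | w, .neg a => ¬ KSat F g w a
  | w, .box a => ∀ w', F.R w w' → KSat F g w' a


/-! ## auxiliary lemmas for substitution composition -/

namespace Subst

lemma biUnion_union' (s t : Finset ℕ) (f : ℕ → Finset ℕ) :
    (s ∪ t).biUnion f = s.biUnion f ∪ t.biUnion f := by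
  ext a; simp [Finset.mem_biUnion, Finset.mem_union]; aesop

lemma union4_comm (a b c d : Finset ℕ) : (a ∪ c) ∪ (b ∪ d) = (a ∪ b) ∪ (c ∪ d) := by
  ext x; simp [Finset.mem_union]; tauto

end Subst

open Subst (biUnion_union' union4_comm)

namespace Tm

lemma subst_congr (t : Tm) (σ σ' : Subst)
    (hjv : ∀ u ∈ t.vars, σ.jv u = σ'.jv u)
    (hjc : ∀ c ∈ t.consts, σ.jc c = σ'.jc c) :
    t.subst σ = t.subst σ' := by
  induction t <;> simp_all [Tm.subst, Tm.vars, Tm.consts]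

lemma vars_subst (t : Tm) (σ : Subst) :
    (t.subst σ).vars =
      t.vars.biUnion (fun u => (σ.jv u).vars) ∪
      t.consts.biUnion (fun c => (σ.jc c).vars) := by
  induction t with
  | var u => simp [Tm.subst, Tm.vars, Tm.consts]
  | const c => simp [Tm.subst, Tm.vars, Tm.consts]
  | app s t ihs iht =>
      show (Tm.app _ _).vars = _
      rw [Tm.vars, ihs, iht]
      show _ = (s.vars ∪ t.vars).biUnion _ ∪ (s.consts ∪ t.consts).biUnion _
      rw [biUnion_union', biUnion_union', union4_comm]
  | plus s t ihs iht =>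
      show (Tm.plus _ _).vars = _
      rw [Tm.vars, ihs, iht]
      show _ = (s.vars ∪ t.vars).biUnion _ ∪ (s.consts ∪ t.consts).biUnion _
      rw [biUnion_union', biUnion_union', union4_comm]

lemma consts_subst (t : Tm) (σ : Subst) :
    (t.subst σ).consts =
      t.vars.biUnion (fun u => (σ.jv u).consts) ∪
      t.consts.biUnion (fun c => (σ.jc c).consts) := by
  induction t with
  | var u => simp [Tm.subst, Tm.vars, Tm.consts]
  | const c => simp [Tm.subst, Tm.vars, Tm.consts]
  | app s t ihs iht =>
      show (Tm.app _ _).consts = _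
      rw [Tm.consts, ihs, iht]
      show _ = (s.vars ∪ t.vars).biUnion _ ∪ (s.consts ∪ t.consts).biUnion _
      rw [biUnion_union', biUnion_union', union4_comm]
  | plus s t ihs iht =>
      show (Tm.plus _ _).consts = _
      rw [Tm.consts, ihs, iht]
      show _ = (s.vars ∪ t.vars).biUnion _ ∪ (s.consts ∪ t.consts).biUnion _
      rw [biUnion_union', biUnion_union', union4_comm]

lemma subst_comp (t : Tm) (τ δ : Subst) :
    t.subst (τ.comp δ) = (t.subst τ).subst δ := by
  induction t <;> simp_all [Tm.subst, Subst.comp]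

end Tm

namespace Subst

lemma biUnion_update_erase (s : Finset ℕ) (x : ℕ) (f g : ℕ → Finset ℕ)
    (hx : g x = ∅) (hagree : ∀ w ≠ x, g w = f w) :
    s.biUnion g = (s.erase x).biUnion f := by
  ext a
  simp only [Finset.mem_biUnion, Finset.mem_erase]
  constructor
  · rintro ⟨w, hw, ha⟩
    by_cases h : w = x
    · subst h; rw [hx] at ha; simp at ha
    · exact ⟨w, ⟨h, hw⟩, (hagree w h) ▸ ha⟩
  · rintro ⟨w, ⟨h, hw⟩, ha⟩
    exact ⟨w, hw, (hagree w h).symm ▸ ha⟩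

lemma erase_biUnion_update (s : Finset ℕ) (x y : ℕ) (f g : ℕ → Finset ℕ)
    (hx : g x = {y}) (hagree : ∀ w ≠ x, g w = f w)
    (hfresh : ∀ w ∈ s.erase x, y ∉ f w) :
    (s.biUnion g).erase y = (s.erase x).biUnion f := by
  ext a
  simp only [Finset.mem_biUnion, Finset.mem_erase]
  constructor
  · rintro ⟨hay, w, hw, ha⟩
    by_cases h : w = x
    · subst h; rw [hx] at ha; simp at ha; exact absurd ha hay
    · exact ⟨w, ⟨h, hw⟩, (hagree w h) ▸ ha⟩
  · rintro ⟨w, ⟨h, hw⟩, ha⟩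
    refine ⟨?_, w, hw, (hagree w h).symm ▸ ha⟩
    rintro rfl
    exact hfresh w (Finset.mem_erase.2 ⟨h, hw⟩) ha

end Subst

open Subst (biUnion_update_erase erase_biUnion_update)

lemma pForced_pv {σ : Subst} {ψ : Fm} {w a : ℕ}
    (hw : w ∈ ψ.fvarP) (ha : a ∈ (σ.pv w).fvarP) : a < pForced σ ψ :=
  Nat.lt_of_succ_le (Finset.le_sup (f := Nat.succ)
    (Finset.mem_union.2 (Or.inl (Finset.mem_biUnion.2 ⟨w, hw, ha⟩))))

lemma pForced_pc {σ : Subst} {ψ : Fm} {d a : ℕ}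
    (hd : d ∈ ψ.pconsts) (ha : a ∈ (σ.pc d).fvarP) : a < pForced σ ψ :=
  Nat.lt_of_succ_le (Finset.le_sup (f := Nat.succ)
    (Finset.mem_union.2 (Or.inr (Finset.mem_biUnion.2 ⟨d, hd, ha⟩))))

lemma jForced_pv {σ : Subst} {ψ : Fm} {w a : ℕ}
    (hw : w ∈ ψ.fvarP) (ha : a ∈ (σ.pv w).fvarJ) : a < jForced σ ψ :=
  Nat.lt_of_succ_le (Finset.le_sup (f := Nat.succ)
    (Finset.mem_union.2 (Or.inl (Finset.mem_union.2 (Or.inl (Finset.mem_union.2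
      (Or.inl (Finset.mem_biUnion.2 ⟨w, hw, ha⟩))))))))

lemma jForced_pc {σ : Subst} {ψ : Fm} {d a : ℕ}
    (hd : d ∈ ψ.pconsts) (ha : a ∈ (σ.pc d).fvarJ) : a < jForced σ ψ :=
  Nat.lt_of_succ_le (Finset.le_sup (f := Nat.succ)
    (Finset.mem_union.2 (Or.inl (Finset.mem_union.2 (Or.inl (Finset.mem_union.2
      (Or.inr (Finset.mem_biUnion.2 ⟨d, hd, ha⟩))))))))

lemma jForced_jv {σ : Subst} {ψ : Fm} {w a : ℕ}
    (hw : w ∈ ψ.fvarJ) (ha : a ∈ (σ.jv w).vars) : a < jForced σ ψ :=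
  Nat.lt_of_succ_le (Finset.le_sup (f := Nat.succ)
    (Finset.mem_union.2 (Or.inl (Finset.mem_union.2
      (Or.inr (Finset.mem_biUnion.2 ⟨w, hw, ha⟩))))))

lemma jForced_jc {σ : Subst} {ψ : Fm} {c a : ℕ}
    (hc : c ∈ ψ.jconsts) (ha : a ∈ (σ.jc c).vars) : a < jForced σ ψ :=
  Nat.lt_of_succ_le (Finset.le_sup (f := Nat.succ)
    (Finset.mem_union.2 (Or.inr (Finset.mem_biUnion.2 ⟨c, hc, ha⟩))))

namespace Fm

lemma fvarP_subst (φ : Fm) (σ : Subst) :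
    (φ.subst σ).fvarP =
      φ.fvarP.biUnion (fun w => (σ.pv w).fvarP) ∪
      φ.pconsts.biUnion (fun d => (σ.pc d).fvarP) := by
  induction φ generalizing σ with
  | pvar x => simp [Fm.subst, Fm.fvarP, Fm.pconsts]
  | pconst d => simp [Fm.subst, Fm.fvarP, Fm.pconsts]
  | imp φ ψ ihφ ihψ =>
      simp only [Fm.subst, Fm.fvarP, Fm.pconsts, ihφ, ihψ, biUnion_union']
      exact union4_comm _ _ _ _
  | ideq φ ψ ihφ ihψ =>
      simp only [Fm.subst, Fm.fvarP, Fm.pconsts, ihφ, ihψ, biUnion_union']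
      exact union4_comm _ _ _ _
  | ref φ ψ ihφ ihψ =>
      simp only [Fm.subst, Fm.fvarP, Fm.pconsts, ihφ, ihψ, biUnion_union']
      exact union4_comm _ _ _ _
  | neg φ ih => simp [Fm.subst, Fm.fvarP, Fm.pconsts, ih]
  | teq s t => simp [Fm.subst, Fm.fvarP, Fm.pconsts]
  | tle s t => simp [Fm.subst, Fm.fvarP, Fm.pconsts]
  | isTrue φ ih => simp [Fm.subst, Fm.fvarP, Fm.pconsts, ih]
  | isFalse φ ih => simp [Fm.subst, Fm.fvarP, Fm.pconsts, ih]
  | box φ ih => simp [Fm.subst, Fm.fvarP, Fm.pconsts, ih]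
  | just φ t ih => simp [Fm.subst, Fm.fvarP, Fm.pconsts, ih]
  | jAll u φ ih => simp [Fm.subst, Fm.fvarP, Fm.pconsts, ih, Subst.updJ]
  | fAll x φ ih =>
      set y := pForced σ (.fAll x φ) with hy
      show ((φ.subst (σ.updP x (.pvar y))).fvarP).erase y = _
      rw [ih, Finset.erase_union_distrib]
      have h1 : ((φ.fvarP.biUnion fun w => (((σ.updP x (.pvar y)).pv w)).fvarP).erase y)
          = (φ.fvarP.erase x).biUnion fun w => (σ.pv w).fvarP := by
        apply erase_biUnion_update
        · simp [Subst.updP, Fm.fvarP]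
        · intro w hw; simp [Subst.updP, Function.update_of_ne hw]
        · intro w hw hmem
          exact absurd (pForced_pv (σ := σ) (ψ := .fAll x φ) hw hmem) (lt_irrefl _)
      have h2 : ((φ.pconsts.biUnion fun d => (((σ.updP x (.pvar y)).pc d)).fvarP).erase y)
          = φ.pconsts.biUnion fun d => (σ.pc d).fvarP := by
        have : (σ.updP x (.pvar y)).pc = σ.pc := rfl
        rw [this]
        apply Finset.erase_eq_of_notMem
        simp only [Finset.mem_biUnion, not_exists]
        intro d hd
        exact absurd (pForced_pc (σ := σ) (ψ := .fAll x φ) hd.1 hd.2) (lt_irrefl _)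
      rw [h1, h2]
      rfl

lemma pconsts_subst (φ : Fm) (σ : Subst) :
    (φ.subst σ).pconsts =
      φ.fvarP.biUnion (fun w => (σ.pv w).pconsts) ∪
      φ.pconsts.biUnion (fun d => (σ.pc d).pconsts) := by
  induction φ generalizing σ with
  | pvar x => simp [Fm.subst, Fm.fvarP, Fm.pconsts]
  | pconst d => simp [Fm.subst, Fm.fvarP, Fm.pconsts]
  | imp φ ψ ihφ ihψ =>
      simp only [Fm.subst, Fm.fvarP, Fm.pconsts, ihφ, ihψ, biUnion_union']
      exact union4_comm _ _ _ _
  | ideq φ ψ ihφ ihψ =>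
      simp only [Fm.subst, Fm.fvarP, Fm.pconsts, ihφ, ihψ, biUnion_union']
      exact union4_comm _ _ _ _
  | ref φ ψ ihφ ihψ =>
      simp only [Fm.subst, Fm.fvarP, Fm.pconsts, ihφ, ihψ, biUnion_union']
      exact union4_comm _ _ _ _
  | neg φ ih => simp [Fm.subst, Fm.fvarP, Fm.pconsts, ih]
  | teq s t => simp [Fm.subst, Fm.fvarP, Fm.pconsts]
  | tle s t => simp [Fm.subst, Fm.fvarP, Fm.pconsts]
  | isTrue φ ih => simp [Fm.subst, Fm.fvarP, Fm.pconsts, ih]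
  | isFalse φ ih => simp [Fm.subst, Fm.fvarP, Fm.pconsts, ih]
  | box φ ih => simp [Fm.subst, Fm.fvarP, Fm.pconsts, ih]
  | just φ t ih => simp [Fm.subst, Fm.fvarP, Fm.pconsts, ih]
  | jAll u φ ih => simp [Fm.subst, Fm.fvarP, Fm.pconsts, ih, Subst.updJ]
  | fAll x φ ih =>
      set y := pForced σ (.fAll x φ) with hy
      show (φ.subst (σ.updP x (.pvar y))).pconsts = _
      rw [ih]
      have h1 : (φ.fvarP.biUnion fun w => (((σ.updP x (.pvar y)).pv w)).pconsts)
          = (φ.fvarP.erase x).biUnion fun w => (σ.pv w).pconsts := by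
        apply biUnion_update_erase
        · simp [Subst.updP, Fm.pconsts]
        · intro w hw; simp [Subst.updP, Function.update_of_ne hw]
      rw [h1]
      rfl

end Fm

namespace Fm

lemma fvarJ_subst (φ : Fm) (σ : Subst) :
    (φ.subst σ).fvarJ =
      φ.fvarP.biUnion (fun w => (σ.pv w).fvarJ) ∪
      φ.pconsts.biUnion (fun d => (σ.pc d).fvarJ) ∪
      φ.fvarJ.biUnion (fun u => (σ.jv u).vars) ∪
      φ.jconsts.biUnion (fun c => (σ.jc c).vars) := by
  induction φ generalizing σ with
  | pvar x => simp [Fm.subst, Fm.fvarP, Fm.pconsts, Fm.fvarJ, Fm.jconsts]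
  | pconst d => simp [Fm.subst, Fm.fvarP, Fm.pconsts, Fm.fvarJ, Fm.jconsts]
  | imp φ ψ ihφ ihψ =>
      simp only [Fm.subst, Fm.fvarP, Fm.pconsts, Fm.fvarJ, Fm.jconsts, ihφ, ihψ,
        biUnion_union']
      ext a; simp only [Finset.mem_union]; tauto
  | ideq φ ψ ihφ ihψ =>
      simp only [Fm.subst, Fm.fvarP, Fm.pconsts, Fm.fvarJ, Fm.jconsts, ihφ, ihψ,
        biUnion_union']
      ext a; simp only [Finset.mem_union]; tauto
  | ref φ ψ ihφ ihψ =>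
      simp only [Fm.subst, Fm.fvarP, Fm.pconsts, Fm.fvarJ, Fm.jconsts, ihφ, ihψ,
        biUnion_union']
      ext a; simp only [Finset.mem_union]; tauto
  | neg φ ih => simp [Fm.subst, Fm.fvarP, Fm.pconsts, Fm.fvarJ, Fm.jconsts, ih]
  | teq s t =>
      simp only [Fm.subst, Fm.fvarP, Fm.pconsts, Fm.fvarJ, Fm.jconsts,
        Tm.vars_subst, biUnion_union']
      ext a; simp only [Finset.mem_union]; tauto
  | tle s t =>
      simp only [Fm.subst, Fm.fvarP, Fm.pconsts, Fm.fvarJ, Fm.jconsts,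
        Tm.vars_subst, biUnion_union']
      ext a; simp only [Finset.mem_union]; tauto
  | isTrue φ ih => simp [Fm.subst, Fm.fvarP, Fm.pconsts, Fm.fvarJ, Fm.jconsts, ih]
  | isFalse φ ih => simp [Fm.subst, Fm.fvarP, Fm.pconsts, Fm.fvarJ, Fm.jconsts, ih]
  | box φ ih => simp [Fm.subst, Fm.fvarP, Fm.pconsts, Fm.fvarJ, Fm.jconsts, ih]
  | just φ t ih =>
      simp only [Fm.subst, Fm.fvarP, Fm.pconsts, Fm.fvarJ, Fm.jconsts, ih,
        Tm.vars_subst, biUnion_union']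
      ext a; simp only [Finset.mem_union]; tauto
  | fAll x φ ih =>
      set y := pForced σ (.fAll x φ) with hy
      show (φ.subst (σ.updP x (.pvar y))).fvarJ = _
      rw [ih]
      have h1 : (φ.fvarP.biUnion fun w => (((σ.updP x (.pvar y)).pv w)).fvarJ)
          = (φ.fvarP.erase x).biUnion fun w => (σ.pv w).fvarJ := by
        apply biUnion_update_erase
        · simp [Subst.updP, Fm.fvarJ]
        · intro w hw; simp [Subst.updP, Function.update_of_ne hw]
      rw [h1]
      rfl
  | jAll u φ ih =>
      set v := jForced σ (.jAll u φ) with hv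
      show ((φ.subst (σ.updJ u (.var v))).fvarJ).erase v = _
      rw [ih, Finset.erase_union_distrib, Finset.erase_union_distrib,
        Finset.erase_union_distrib]
      have h1 : ((φ.fvarP.biUnion fun w => (((σ.updJ u (.var v)).pv w)).fvarJ).erase v)
          = φ.fvarP.biUnion fun w => (σ.pv w).fvarJ := by
        have : (σ.updJ u (.var v)).pv = σ.pv := rfl
        rw [this]
        apply Finset.erase_eq_of_notMem
        simp only [Finset.mem_biUnion, not_exists]
        intro w hw
        exact absurd (jForced_pv (σ := σ) (ψ := .jAll u φ) hw.1 hw.2) (lt_irrefl _)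
      have h2 : ((φ.pconsts.biUnion fun d => (((σ.updJ u (.var v)).pc d)).fvarJ).erase v)
          = φ.pconsts.biUnion fun d => (σ.pc d).fvarJ := by
        have : (σ.updJ u (.var v)).pc = σ.pc := rfl
        rw [this]
        apply Finset.erase_eq_of_notMem
        simp only [Finset.mem_biUnion, not_exists]
        intro d hd
        exact absurd (jForced_pc (σ := σ) (ψ := .jAll u φ) hd.1 hd.2) (lt_irrefl _)
      have h3 : ((φ.fvarJ.biUnion fun w => (((σ.updJ u (.var v)).jv w)).vars).erase v)
          = (φ.fvarJ.erase u).biUnion fun w => (σ.jv w).vars := by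
        apply erase_biUnion_update
        · simp [Subst.updJ, Tm.vars]
        · intro w hw; simp [Subst.updJ, Function.update_of_ne hw]
        · intro w hw hmem
          exact absurd (jForced_jv (σ := σ) (ψ := .jAll u φ) hw hmem) (lt_irrefl _)
      have h4 : ((φ.jconsts.biUnion fun c => (((σ.updJ u (.var v)).jc c)).vars).erase v)
          = φ.jconsts.biUnion fun c => (σ.jc c).vars := by
        have : (σ.updJ u (.var v)).jc = σ.jc := rfl
        rw [this]
        apply Finset.erase_eq_of_notMem
        simp only [Finset.mem_biUnion, not_exists]
        intro c hc
        exact absurd (jForced_jc (σ := σ) (ψ := .jAll u φ) hc.1 hc.2) (lt_irrefl _)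
      rw [h1, h2, h3, h4]
      rfl

lemma jconsts_subst (φ : Fm) (σ : Subst) :
    (φ.subst σ).jconsts =
      φ.fvarP.biUnion (fun w => (σ.pv w).jconsts) ∪
      φ.pconsts.biUnion (fun d => (σ.pc d).jconsts) ∪
      φ.fvarJ.biUnion (fun u => (σ.jv u).consts) ∪
      φ.jconsts.biUnion (fun c => (σ.jc c).consts) := by
  induction φ generalizing σ with
  | pvar x => simp [Fm.subst, Fm.fvarP, Fm.pconsts, Fm.fvarJ, Fm.jconsts]
  | pconst d => simp [Fm.subst, Fm.fvarP, Fm.pconsts, Fm.fvarJ, Fm.jconsts]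
  | imp φ ψ ihφ ihψ =>
      simp only [Fm.subst, Fm.fvarP, Fm.pconsts, Fm.fvarJ, Fm.jconsts, ihφ, ihψ,
        biUnion_union']
      ext a; simp only [Finset.mem_union]; tauto
  | ideq φ ψ ihφ ihψ =>
      simp only [Fm.subst, Fm.fvarP, Fm.pconsts, Fm.fvarJ, Fm.jconsts, ihφ, ihψ,
        biUnion_union']
      ext a; simp only [Finset.mem_union]; tauto
  | ref φ ψ ihφ ihψ =>
      simp only [Fm.subst, Fm.fvarP, Fm.pconsts, Fm.fvarJ, Fm.jconsts, ihφ, ihψ,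
        biUnion_union']
      ext a; simp only [Finset.mem_union]; tauto
  | neg φ ih => simp [Fm.subst, Fm.fvarP, Fm.pconsts, Fm.fvarJ, Fm.jconsts, ih]
  | teq s t =>
      simp only [Fm.subst, Fm.fvarP, Fm.pconsts, Fm.fvarJ, Fm.jconsts,
        Tm.consts_subst, biUnion_union']
      ext a; simp only [Finset.mem_union]; tauto
  | tle s t =>
      simp only [Fm.subst, Fm.fvarP, Fm.pconsts, Fm.fvarJ, Fm.jconsts,
        Tm.consts_subst, biUnion_union']
      ext a; simp only [Finset.mem_union]; tauto
  | isTrue φ ih => simp [Fm.subst, Fm.fvarP, Fm.pconsts, Fm.fvarJ, Fm.jconsts, ih]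
  | isFalse φ ih => simp [Fm.subst, Fm.fvarP, Fm.pconsts, Fm.fvarJ, Fm.jconsts, ih]
  | box φ ih => simp [Fm.subst, Fm.fvarP, Fm.pconsts, Fm.fvarJ, Fm.jconsts, ih]
  | just φ t ih =>
      simp only [Fm.subst, Fm.fvarP, Fm.pconsts, Fm.fvarJ, Fm.jconsts, ih,
        Tm.consts_subst, biUnion_union']
      ext a; simp only [Finset.mem_union]; tauto
  | fAll x φ ih =>
      set y := pForced σ (.fAll x φ) with hy
      show (φ.subst (σ.updP x (.pvar y))).jconsts = _
      rw [ih]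
      have h1 : (φ.fvarP.biUnion fun w => (((σ.updP x (.pvar y)).pv w)).jconsts)
          = (φ.fvarP.erase x).biUnion fun w => (σ.pv w).jconsts := by
        apply biUnion_update_erase
        · simp [Subst.updP, Fm.jconsts]
        · intro w hw; simp [Subst.updP, Function.update_of_ne hw]
      rw [h1]
      rfl
  | jAll u φ ih =>
      set v := jForced σ (.jAll u φ) with hv
      show (φ.subst (σ.updJ u (.var v))).jconsts = _
      rw [ih]
      have h3 : (φ.fvarJ.biUnion fun w => (((σ.updJ u (.var v)).jv w)).consts)
          = (φ.fvarJ.erase u).biUnion fun w => (σ.jv w).consts := by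
        apply biUnion_update_erase
        · simp [Subst.updJ, Tm.consts]
        · intro w hw; simp [Subst.updJ, Function.update_of_ne hw]
      rw [h3]
      rfl

end Fm

lemma pForced_congr {σ σ' : Subst} (ψ : Fm)
    (hpv : ∀ w ∈ ψ.fvarP, σ.pv w = σ'.pv w)
    (hpc : ∀ d ∈ ψ.pconsts, σ.pc d = σ'.pc d) :
    pForced σ ψ = pForced σ' ψ := by
  unfold pForced
  have e1 : ψ.fvarP.biUnion (fun w => (σ.pv w).fvarP)
      = ψ.fvarP.biUnion (fun w => (σ'.pv w).fvarP) :=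
    Finset.biUnion_congr rfl fun w hw => by rw [hpv w hw]
  have e2 : ψ.pconsts.biUnion (fun d => (σ.pc d).fvarP)
      = ψ.pconsts.biUnion (fun d => (σ'.pc d).fvarP) :=
    Finset.biUnion_congr rfl fun d hd => by rw [hpc d hd]
  rw [e1, e2]

lemma jForced_congr {σ σ' : Subst} (ψ : Fm)
    (hpv : ∀ w ∈ ψ.fvarP, σ.pv w = σ'.pv w)
    (hpc : ∀ d ∈ ψ.pconsts, σ.pc d = σ'.pc d)
    (hjv : ∀ u ∈ ψ.fvarJ, σ.jv u = σ'.jv u)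
    (hjc : ∀ c ∈ ψ.jconsts, σ.jc c = σ'.jc c) :
    jForced σ ψ = jForced σ' ψ := by
  unfold jForced
  have e1 : ψ.fvarP.biUnion (fun w => (σ.pv w).fvarJ)
      = ψ.fvarP.biUnion (fun w => (σ'.pv w).fvarJ) :=
    Finset.biUnion_congr rfl fun w hw => by rw [hpv w hw]
  have e2 : ψ.pconsts.biUnion (fun d => (σ.pc d).fvarJ)
      = ψ.pconsts.biUnion (fun d => (σ'.pc d).fvarJ) :=
    Finset.biUnion_congr rfl fun d hd => by rw [hpc d hd]
  have e3 : ψ.fvarJ.biUnion (fun u => (σ.jv u).vars)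
      = ψ.fvarJ.biUnion (fun u => (σ'.jv u).vars) :=
    Finset.biUnion_congr rfl fun u hu => by rw [hjv u hu]
  have e4 : ψ.jconsts.biUnion (fun c => (σ.jc c).vars)
      = ψ.jconsts.biUnion (fun c => (σ'.jc c).vars) :=
    Finset.biUnion_congr rfl fun c hc => by rw [hjc c hc]
  rw [e1, e2, e3, e4]

lemma Fm.subst_congr (φ : Fm) (σ σ' : Subst)
    (hpv : ∀ w ∈ φ.fvarP, σ.pv w = σ'.pv w)
    (hpc : ∀ d ∈ φ.pconsts, σ.pc d = σ'.pc d)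
    (hjv : ∀ u ∈ φ.fvarJ, σ.jv u = σ'.jv u)
    (hjc : ∀ c ∈ φ.jconsts, σ.jc c = σ'.jc c) :
    φ.subst σ = φ.subst σ' := by
  induction φ generalizing σ σ' with
  | pvar x => exact hpv x (by simp [Fm.fvarP])
  | pconst d => exact hpc d (by simp [Fm.pconsts])
  | imp φ ψ ihφ ihψ =>
      simp only [Fm.fvarP, Fm.pconsts, Fm.fvarJ, Fm.jconsts, Finset.mem_union] at hpv hpc hjv hjc
      simp only [Fm.subst]
      rw [ihφ σ σ' (fun w hw => hpv w (Or.inl hw)) (fun d hd => hpc d (Or.inl hd))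
            (fun u hu => hjv u (Or.inl hu)) (fun c hc => hjc c (Or.inl hc)),
          ihψ σ σ' (fun w hw => hpv w (Or.inr hw)) (fun d hd => hpc d (Or.inr hd))
            (fun u hu => hjv u (Or.inr hu)) (fun c hc => hjc c (Or.inr hc))]
  | ideq φ ψ ihφ ihψ =>
      simp only [Fm.fvarP, Fm.pconsts, Fm.fvarJ, Fm.jconsts, Finset.mem_union] at hpv hpc hjv hjc
      simp only [Fm.subst]
      rw [ihφ σ σ' (fun w hw => hpv w (Or.inl hw)) (fun d hd => hpc d (Or.inl hd))
            (fun u hu => hjv u (Or.inl hu)) (fun c hc => hjc c (Or.inl hc)),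
          ihψ σ σ' (fun w hw => hpv w (Or.inr hw)) (fun d hd => hpc d (Or.inr hd))
            (fun u hu => hjv u (Or.inr hu)) (fun c hc => hjc c (Or.inr hc))]
  | ref φ ψ ihφ ihψ =>
      simp only [Fm.fvarP, Fm.pconsts, Fm.fvarJ, Fm.jconsts, Finset.mem_union] at hpv hpc hjv hjc
      simp only [Fm.subst]
      rw [ihφ σ σ' (fun w hw => hpv w (Or.inl hw)) (fun d hd => hpc d (Or.inl hd))
            (fun u hu => hjv u (Or.inl hu)) (fun c hc => hjc c (Or.inl hc)),
          ihψ σ σ' (fun w hw => hpv w (Or.inr hw)) (fun d hd => hpc d (Or.inr hd))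
            (fun u hu => hjv u (Or.inr hu)) (fun c hc => hjc c (Or.inr hc))]
  | neg φ ih =>
      simp only [Fm.subst]
      rw [ih σ σ' hpv hpc hjv hjc]
  | teq s t =>
      simp only [Fm.fvarJ, Fm.jconsts, Finset.mem_union] at hjv hjc
      simp only [Fm.subst]
      rw [Tm.subst_congr s σ σ' (fun u hu => hjv u (Or.inl hu)) (fun c hc => hjc c (Or.inl hc)),
          Tm.subst_congr t σ σ' (fun u hu => hjv u (Or.inr hu)) (fun c hc => hjc c (Or.inr hc))]
  | tle s t =>
      simp only [Fm.fvarJ, Fm.jconsts, Finset.mem_union] at hjv hjc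
      simp only [Fm.subst]
      rw [Tm.subst_congr s σ σ' (fun u hu => hjv u (Or.inl hu)) (fun c hc => hjc c (Or.inl hc)),
          Tm.subst_congr t σ σ' (fun u hu => hjv u (Or.inr hu)) (fun c hc => hjc c (Or.inr hc))]
  | isTrue φ ih =>
      simp only [Fm.subst]
      rw [ih σ σ' hpv hpc hjv hjc]
  | isFalse φ ih =>
      simp only [Fm.subst]
      rw [ih σ σ' hpv hpc hjv hjc]
  | box φ ih =>
      simp only [Fm.subst]
      rw [ih σ σ' hpv hpc hjv hjc]
  | just φ t ih =>
      simp only [Fm.fvarJ, Fm.jconsts, Finset.mem_union] at hjv hjc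
      simp only [Fm.subst]
      rw [ih σ σ' hpv hpc (fun u hu => hjv u (Or.inl hu)) (fun c hc => hjc c (Or.inl hc)),
          Tm.subst_congr t σ σ' (fun u hu => hjv u (Or.inr hu)) (fun c hc => hjc c (Or.inr hc))]
  | fAll x φ ih =>
      have hy : pForced σ (.fAll x φ) = pForced σ' (.fAll x φ) :=
        pForced_congr _ hpv hpc
      set y := pForced σ (.fAll x φ) with hydef
      show Fm.fAll y (φ.subst (σ.updP x (.pvar y)))
          = Fm.fAll (pForced σ' (.fAll x φ)) (φ.subst (σ'.updP x (.pvar (pForced σ' (.fAll x φ)))))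
      rw [← hy]
      congr 1
      apply ih
      · intro w hw
        by_cases h : w = x
        · subst h; simp [Subst.updP]
        · simp only [Subst.updP, Function.update_of_ne h]
          exact hpv w (Finset.mem_erase.2 ⟨h, hw⟩)
      · exact hpc
      · exact hjv
      · exact hjc
  | jAll u φ ih =>
      have hv : jForced σ (.jAll u φ) = jForced σ' (.jAll u φ) :=
        jForced_congr _ hpv hpc hjv hjc
      set v := jForced σ (.jAll u φ) with hvdef
      show Fm.jAll v (φ.subst (σ.updJ u (.var v)))
          = Fm.jAll (jForced σ' (.jAll u φ)) (φ.subst (σ'.updJ u (.var (jForced σ' (.jAll u φ)))))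
      rw [← hv]
      congr 1
      apply ih
      · exact hpv
      · exact hpc
      · intro w hw
        by_cases h : w = u
        · subst h; simp [Subst.updJ]
        · simp only [Subst.updJ, Function.update_of_ne h]
          exact hjv w (Finset.mem_erase.2 ⟨h, hw⟩)
      · exact hjc

lemma biUnion_union_fun (s : Finset ℕ) (f g : ℕ → Finset ℕ) :
    s.biUnion (fun w => f w ∪ g w) = s.biUnion f ∪ s.biUnion g := by
  ext a
  simp only [Finset.mem_biUnion, Finset.mem_union]
  constructor
  · rintro ⟨w, hw, h | h⟩
    · exact Or.inl ⟨w, hw, h⟩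
    · exact Or.inr ⟨w, hw, h⟩
  · rintro (⟨w, hw, h⟩ | ⟨w, hw, h⟩)
    · exact ⟨w, hw, Or.inl h⟩
    · exact ⟨w, hw, Or.inr h⟩

lemma pForced_comp (τ δ : Subst) (ψ : Fm) :
    pForced (τ.comp δ) ψ = pForced δ (ψ.subst τ) := by
  unfold pForced
  congr 1
  have hL1 : ψ.fvarP.biUnion (fun w => ((τ.comp δ).pv w).fvarP)
      = ψ.fvarP.biUnion (fun w => (τ.pv w).fvarP.biUnion fun b => (δ.pv b).fvarP)
        ∪ ψ.fvarP.biUnion (fun w => (τ.pv w).pconsts.biUnion fun b => (δ.pc b).fvarP) := by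
    rw [← biUnion_union_fun]
    exact Finset.biUnion_congr rfl fun w _ => Fm.fvarP_subst _ _
  have hL2 : ψ.pconsts.biUnion (fun d => ((τ.comp δ).pc d).fvarP)
      = ψ.pconsts.biUnion (fun d => (τ.pc d).fvarP.biUnion fun b => (δ.pv b).fvarP)
        ∪ ψ.pconsts.biUnion (fun d => (τ.pc d).pconsts.biUnion fun b => (δ.pc b).fvarP) := by
    rw [← biUnion_union_fun]
    exact Finset.biUnion_congr rfl fun d _ => Fm.fvarP_subst _ _
  rw [hL1, hL2, Fm.fvarP_subst, Fm.pconsts_subst]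
  simp only [biUnion_union', Finset.biUnion_biUnion]
  ext a
  simp only [Finset.mem_union]
  tauto

lemma jForced_comp (τ δ : Subst) (ψ : Fm) :
    jForced (τ.comp δ) ψ = jForced δ (ψ.subst τ) := by
  unfold jForced
  congr 1
  have hL1 : ψ.fvarP.biUnion (fun w => ((τ.comp δ).pv w).fvarJ)
      = ψ.fvarP.biUnion (fun w => (τ.pv w).fvarP.biUnion fun b => (δ.pv b).fvarJ)
        ∪ ψ.fvarP.biUnion (fun w => (τ.pv w).pconsts.biUnion fun b => (δ.pc b).fvarJ)
        ∪ ψ.fvarP.biUnion (fun w => (τ.pv w).fvarJ.biUnion fun b => (δ.jv b).vars)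
        ∪ ψ.fvarP.biUnion (fun w => (τ.pv w).jconsts.biUnion fun b => (δ.jc b).vars) := by
    rw [← biUnion_union_fun, ← biUnion_union_fun, ← biUnion_union_fun]
    exact Finset.biUnion_congr rfl fun w _ => Fm.fvarJ_subst _ _
  have hL2 : ψ.pconsts.biUnion (fun d => ((τ.comp δ).pc d).fvarJ)
      = ψ.pconsts.biUnion (fun d => (τ.pc d).fvarP.biUnion fun b => (δ.pv b).fvarJ)
        ∪ ψ.pconsts.biUnion (fun d => (τ.pc d).pconsts.biUnion fun b => (δ.pc b).fvarJ)
        ∪ ψ.pconsts.biUnion (fun d => (τ.pc d).fvarJ.biUnion fun b => (δ.jv b).vars)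
        ∪ ψ.pconsts.biUnion (fun d => (τ.pc d).jconsts.biUnion fun b => (δ.jc b).vars) := by
    rw [← biUnion_union_fun, ← biUnion_union_fun, ← biUnion_union_fun]
    exact Finset.biUnion_congr rfl fun d _ => Fm.fvarJ_subst _ _
  have hL3 : ψ.fvarJ.biUnion (fun u => ((τ.comp δ).jv u).vars)
      = ψ.fvarJ.biUnion (fun u => (τ.jv u).vars.biUnion fun b => (δ.jv b).vars)
        ∪ ψ.fvarJ.biUnion (fun u => (τ.jv u).consts.biUnion fun b => (δ.jc b).vars) := by
    rw [← biUnion_union_fun]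
    exact Finset.biUnion_congr rfl fun u _ => Tm.vars_subst _ _
  have hL4 : ψ.jconsts.biUnion (fun c => ((τ.comp δ).jc c).vars)
      = ψ.jconsts.biUnion (fun c => (τ.jc c).vars.biUnion fun b => (δ.jv b).vars)
        ∪ ψ.jconsts.biUnion (fun c => (τ.jc c).consts.biUnion fun b => (δ.jc b).vars) := by
    rw [← biUnion_union_fun]
    exact Finset.biUnion_congr rfl fun c _ => Tm.vars_subst _ _
  rw [hL1, hL2, hL3, hL4, Fm.fvarP_subst, Fm.pconsts_subst, Fm.fvarJ_subst,
    Fm.jconsts_subst]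
  simp only [biUnion_union', Finset.biUnion_biUnion]
  ext a
  simp only [Finset.mem_union]
  tauto

theorem Fm.subst_comp (φ : Fm) (τ δ : Subst) :
    φ.subst (τ.comp δ) = (φ.subst τ).subst δ := by
  induction φ generalizing τ δ with
  | pvar x => rfl
  | pconst d => rfl
  | imp φ ψ ihφ ihψ => simp only [Fm.subst, ihφ, ihψ]
  | ideq φ ψ ihφ ihψ => simp only [Fm.subst, ihφ, ihψ]
  | ref φ ψ ihφ ihψ => simp only [Fm.subst, ihφ, ihψ]
  | neg φ ih => simp only [Fm.subst, ih]
  | teq s t => simp only [Fm.subst, Tm.subst_comp]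
  | tle s t => simp only [Fm.subst, Tm.subst_comp]
  | isTrue φ ih => simp only [Fm.subst, ih]
  | isFalse φ ih => simp only [Fm.subst, ih]
  | box φ ih => simp only [Fm.subst, ih]
  | just φ t ih => simp only [Fm.subst, ih, Tm.subst_comp]
  | fAll x φ ih =>
      set y := pForced τ (.fAll x φ) with hydef
      set y2 := pForced δ ((Fm.fAll x φ).subst τ) with hy2def
      set y1 := pForced (τ.comp δ) (.fAll x φ) with hy1def
      have hy12 : y1 = y2 := pForced_comp τ δ (.fAll x φ)
      show Fm.fAll y1 (φ.subst ((τ.comp δ).updP x (.pvar y1)))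
          = (Fm.fAll y (φ.subst (τ.updP x (.pvar y)))).subst δ
      have hy2' : pForced δ (.fAll y (φ.subst (τ.updP x (.pvar y)))) = y2 := rfl
      show Fm.fAll y1 (φ.subst ((τ.comp δ).updP x (.pvar y1)))
          = Fm.fAll y2 ((φ.subst (τ.updP x (.pvar y))).subst (δ.updP y (.pvar y2)))
      rw [← ih (τ.updP x (.pvar y)) (δ.updP y (.pvar y2)), hy12]
      congr 1
      apply Fm.subst_congr
      · intro w hw
        by_cases h : w = x
        · rw [h]
          simp [Subst.updP, Subst.comp, Fm.subst]
        · rw [show ((τ.comp δ).updP x (.pvar y2)).pv w = (τ.pv w).subst δ from by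
              simp [Subst.updP, Subst.comp, Function.update_of_ne h],
            show ((τ.updP x (.pvar y)).comp (δ.updP y (.pvar y2))).pv w
                = (τ.pv w).subst (δ.updP y (.pvar y2)) from by
              simp [Subst.updP, Subst.comp, Function.update_of_ne h]]
          apply Fm.subst_congr
          · intro b hb
            have hlt : b < y := pForced_pv (σ := τ) (ψ := .fAll x φ)
              (Finset.mem_erase.2 ⟨h, hw⟩) hb
            simp [Subst.updP, Function.update_of_ne (by omega : b ≠ y)]
          · intro d _; rfl
          · intro u _; rfl
          · intro c _; rfl
      · intro d hd
        show (τ.pc d).subst δ = (τ.pc d).subst (δ.updP y (.pvar y2))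
        apply Fm.subst_congr
        · intro b hb
          have hlt : b < y := pForced_pc (σ := τ) (ψ := .fAll x φ) hd hb
          simp [Subst.updP, Function.update_of_ne (by omega : b ≠ y)]
        · intro d _; rfl
        · intro u _; rfl
        · intro c _; rfl
      · intro u _
        show (τ.jv u).subst δ = (τ.jv u).subst (δ.updP y (.pvar y2))
        exact Tm.subst_congr _ _ _ (fun _ _ => rfl) (fun _ _ => rfl)
      · intro c _
        show (τ.jc c).subst δ = (τ.jc c).subst (δ.updP y (.pvar y2))
        exact Tm.subst_congr _ _ _ (fun _ _ => rfl) (fun _ _ => rfl)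
  | jAll u φ ih =>
      set v := jForced τ (.jAll u φ) with hvdef
      set v2 := jForced δ ((Fm.jAll u φ).subst τ) with hv2def
      set v1 := jForced (τ.comp δ) (.jAll u φ) with hv1def
      have hv12 : v1 = v2 := jForced_comp τ δ (.jAll u φ)
      show Fm.jAll v1 (φ.subst ((τ.comp δ).updJ u (.var v1)))
          = Fm.jAll v2 ((φ.subst (τ.updJ u (.var v))).subst (δ.updJ v (.var v2)))
      rw [← ih (τ.updJ u (.var v)) (δ.updJ v (.var v2)), hv12]
      congr 1
      apply Fm.subst_congr
      · intro w hw
        show (τ.pv w).subst δ = (τ.pv w).subst (δ.updJ v (.var v2))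
        apply Fm.subst_congr
        · intro b _; rfl
        · intro d _; rfl
        · intro b hb
          have hlt : b < v := jForced_pv (σ := τ) (ψ := .jAll u φ) hw hb
          simp [Subst.updJ, Function.update_of_ne (by omega : b ≠ v)]
        · intro c _; rfl
      · intro d hd
        show (τ.pc d).subst δ = (τ.pc d).subst (δ.updJ v (.var v2))
        apply Fm.subst_congr
        · intro b _; rfl
        · intro b _; rfl
        · intro b hb
          have hlt : b < v := jForced_pc (σ := τ) (ψ := .jAll u φ) hd hb
          simp [Subst.updJ, Function.update_of_ne (by omega : b ≠ v)]
        · intro c _; rfl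
      · intro w hw
        by_cases h : w = u
        · rw [h]
          simp [Subst.updJ, Subst.comp, Tm.subst]
        · rw [show ((τ.comp δ).updJ u (.var v2)).jv w = (τ.jv w).subst δ from by
              simp [Subst.updJ, Subst.comp, Function.update_of_ne h],
            show ((τ.updJ u (.var v)).comp (δ.updJ v (.var v2))).jv w
                = (τ.jv w).subst (δ.updJ v (.var v2)) from by
              simp [Subst.updJ, Subst.comp, Function.update_of_ne h]]
          apply Tm.subst_congr
          · intro b hb
            have hlt : b < v := jForced_jv (σ := τ) (ψ := .jAll u φ)
              (Finset.mem_erase.2 ⟨h, hw⟩) hb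
            simp [Subst.updJ, Function.update_of_ne (by omega : b ≠ v)]
          · intro c _; rfl
      · intro c hc
        show (τ.jc c).subst δ = (τ.jc c).subst (δ.updJ v (.var v2))
        apply Tm.subst_congr
        · intro b hb
          have hlt : b < v := jForced_jc (σ := τ) (ψ := .jAll u φ) hc hb
          simp [Subst.updJ, Function.update_of_ne (by omega : b ≠ v)]
        · intro c _; rfl
end EJ
/-- composition of substitutions is associative. -/
theorem subst_comp_assoc (σ τ δ : EJ.Subst) :
    σ.comp (τ.comp δ) = (σ.comp τ).comp δ := by
  cases σ with
  | mk pv jv pc jc =>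
    simp only [EJ.Subst.comp, EJ.Subst.mk.injEq]
    exact ⟨funext fun x => EJ.Fm.subst_comp _ τ δ, funext fun u => EJ.Tm.subst_comp _ τ δ,
      funext fun d => EJ.Fm.subst_comp _ τ δ, funext fun c => EJ.Tm.subst_comp _ τ δ⟩
end

section
/- In the system Ax + (4) + (AxNec), the Necessitation rule is admissible: if φ is derivable from the empty set, then so is □φ. -/
/-! Induction on the derivation: an axiom is boxed by Axiom Necessitation, a boxed axiom is boxed
once more by (4), and Modus Ponens goes through because K is a theorem of Ax. For K, axiom `necJust`
says that `□φ` means that `φ` has some justification: from `(ψ → φ) : u` and `ψ : v` the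
application axiom gives `φ : u·v`, and any `φ : t` yields `⋁w. (φ : w)`, i.e. `□φ`. This last step
instantiates `w := t`, so it needs `φ ≡ φ[w := t]` for `w` not free in `φ`; the substitution axiom
gives `φ[ε] ≡ φ[w := t]`, and `φ[ε]` is `φ` with its bound variables renamed, hence alpha-congruent
to `φ`. -/

theorem Finset.erase_image_update {α β : Type*} [DecidableEq α] [DecidableEq β]
    (s : Finset α) (f : α → β) (x : α) (y : β) (hy : ∀ b ∈ s.erase x, f b ≠ y) :
    (s.image (Function.update f x y)).erase y = (s.erase x).image f := by
  ext c
  simp only [Finset.mem_erase, Finset.mem_image]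
  constructor
  · rintro ⟨hcy, b, hb, rfl⟩
    have hbx : b ≠ x := by rintro rfl; simp at hcy
    exact ⟨b, ⟨hbx, hb⟩, (Function.update_of_ne hbx _ _).symm⟩
  · rintro ⟨b, ⟨hbx, hb⟩, rfl⟩
    exact ⟨hy b (Finset.mem_erase.2 ⟨hbx, hb⟩), b, hb, Function.update_of_ne hbx _ _⟩

theorem Function.update_comp_update_apply {α β γ : Type*} [DecidableEq α] [DecidableEq β]
    {f : α → β} {f' : β → γ} {x b : α} {y : β} (z : γ) (hb : b ≠ x → f b ≠ y) :
    (Function.update f' y z ∘ Function.update f x y) b = Function.update (f' ∘ f) x z b := by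
  by_cases hbx : b = x
  · subst hbx; simp
  · simp [Function.update_of_ne hbx, Function.update_of_ne (hb hbx)]

theorem Function.update_comp_update_eq_self {α : Type*} [DecidableEq α] {s : Finset α} {f : α → α}
    {x y b : α} (hf : ∀ b ∈ s.erase x, f b = b) (hy : ∀ b ∈ s.erase x, f b ≠ y) (hb : b ∈ s) :
    (Function.update id y x ∘ Function.update f x y) b = b := by
  by_cases hbx : b = x
  · simp [hbx]
  · have hb' : b ∈ s.erase x := Finset.mem_erase.2 ⟨hbx, hb⟩
    simpa [Function.update_of_ne hbx, Function.update_of_ne (hy b hb')] using hf b hb'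

theorem Finset.notMem_image_update {α : Type*} [DecidableEq α] {s : Finset α} {f : α → α} {x y : α}
    (hf : ∀ b ∈ s.erase x, f b = b) (hxy : x ≠ y) : x ∉ s.image (Function.update f x y) := by
  simp only [Finset.mem_image, not_exists, not_and]
  intro b hb hbx
  by_cases hb' : b = x
  · subst hb'
    exact hxy (by simpa using hbx.symm)
  · rw [Function.update_of_ne hb', hf b (Finset.mem_erase.2 ⟨hb', hb⟩)] at hbx
    exact hb' hbx

namespace EJ

@[simps]
def ren (f g : ℕ → ℕ) : Subst := ⟨fun x => .pvar (f x), fun u => .var (g u), Fm.pconst, Tm.const⟩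

theorem subst_id_eq_ren : Subst.id = ren id id := rfl

theorem ren_updP (f g : ℕ → ℕ) (x y : ℕ) :
    (ren f g).updP x (.pvar y) = ren (Function.update f x y) g := by
  simp only [ren, Subst.updP, Subst.mk.injEq, and_true]
  funext w
  by_cases h : w = x <;> simp [Function.update, h]

theorem ren_updJ (f g : ℕ → ℕ) (u v : ℕ) :
    (ren f g).updJ u (.var v) = ren f (Function.update g u v) := by
  simp only [ren, Subst.updJ, Subst.mk.injEq, true_and, and_true]
  funext w
  by_cases h : w = u <;> simp [Function.update, h]

theorem Tm.subst_eq_self (t : Tm) {σ : Subst} (hjv : σ.jv = Tm.var) (hjc : σ.jc = Tm.const) :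
    t.subst σ = t := by
  induction t with
  | var u => simp [Tm.subst, hjv]
  | const c => simp [Tm.subst, hjc]
  | app s t ihs iht => simp [Tm.subst, ihs, iht]
  | plus s t ihs iht => simp [Tm.subst, ihs, iht]

theorem Tm.subst_ren_congr (t : Tm) {f g f' g' : ℕ → ℕ} (hg : ∀ u ∈ t.vars, g u = g' u) :
    t.subst (ren f g) = t.subst (ren f' g') := by
  induction t with
  | var u => simp [Tm.subst, hg u (by simp [Tm.vars])]
  | const c => simp [Tm.subst]
  | app s t ihs iht | plus s t ihs iht =>
    simp only [Tm.vars, Finset.mem_union] at hg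
    simp only [Tm.subst, ihs (fun u hu => hg u (.inl hu)), iht (fun u hu => hg u (.inr hu))]

theorem Tm.subst_ren_eq_self (t : Tm) {f g : ℕ → ℕ} (hg : ∀ u ∈ t.vars, g u = u) :
    t.subst (ren f g) = t :=
  (t.subst_ren_congr (f' := f) (g' := id) hg).trans (t.subst_eq_self rfl rfl)

theorem Tm.vars_subst_ren (t : Tm) (f g : ℕ → ℕ) :
    (t.subst (ren f g)).vars = t.vars.image g := by
  induction t with
  | var u => simp [Tm.subst, Tm.vars]
  | const c => simp [Tm.subst, Tm.vars]
  | app s t ihs iht | plus s t ihs iht => simp [Tm.subst, Tm.vars, ihs, iht, Finset.image_union]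

theorem Tm.subst_ren_ren (t : Tm) (f g f' g' : ℕ → ℕ) :
    (t.subst (ren f g)).subst (ren f' g') = t.subst (ren (f' ∘ f) (g' ∘ g)) := by
  induction t with
  | var u => simp [Tm.subst]
  | const c => simp [Tm.subst]
  | app s t ihs iht | plus s t ihs iht => simp [Tm.subst, ihs, iht]

theorem pForced_ren (f g : ℕ → ℕ) (φ : Fm) :
    pForced (ren f g) φ = (φ.fvarP.image f).sup Nat.succ := by
  unfold pForced
  congr 1
  ext b
  simp [Fm.fvarP, eq_comm]

theorem jForced_ren (f g : ℕ → ℕ) (φ : Fm) :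
    jForced (ren f g) φ = (φ.fvarJ.image g).sup Nat.succ := by
  unfold jForced
  congr 1
  ext b
  simp [Fm.fvarJ, Tm.vars, eq_comm]

theorem lt_pForced_ren {f : ℕ → ℕ} (g : ℕ → ℕ) {φ : Fm} {b : ℕ} (hb : b ∈ φ.fvarP) :
    f b < pForced (ren f g) φ :=
  pForced_ren f g φ ▸ Nat.lt_of_succ_le (Finset.le_sup (Finset.mem_image_of_mem f hb))

theorem lt_jForced_ren (f : ℕ → ℕ) {g : ℕ → ℕ} {φ : Fm} {b : ℕ} (hb : b ∈ φ.fvarJ) :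
    g b < jForced (ren f g) φ :=
  jForced_ren f g φ ▸ Nat.lt_of_succ_le (Finset.le_sup (Finset.mem_image_of_mem g hb))

theorem Fm.fvarP_subst_ren (φ : Fm) (f g : ℕ → ℕ) :
    (φ.subst (ren f g)).fvarP = φ.fvarP.image f := by
  induction φ generalizing f g with
  | fAll x χ ih =>
    simp only [Fm.subst, ren_updP, Fm.fvarP, ih]
    exact Finset.erase_image_update _ _ _ _
      fun b hb => (lt_pForced_ren g (φ := .fAll x χ) hb).ne
  | jAll u χ ih => simp only [Fm.subst, ren_updJ, Fm.fvarP, ih]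
  | _ => simp_all [Fm.subst, Fm.fvarP, Finset.image_union]

theorem Fm.fvarJ_subst_ren (φ : Fm) (f g : ℕ → ℕ) :
    (φ.subst (ren f g)).fvarJ = φ.fvarJ.image g := by
  induction φ generalizing f g with
  | fAll x χ ih => simp only [Fm.subst, ren_updP, Fm.fvarJ, ih]
  | jAll u χ ih =>
    simp only [Fm.subst, ren_updJ, Fm.fvarJ, ih]
    exact Finset.erase_image_update _ _ _ _
      fun b hb => (lt_jForced_ren f (φ := .jAll u χ) hb).ne
  | _ => simp_all [Fm.subst, Fm.fvarJ, Tm.vars_subst_ren, Finset.image_union]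

theorem Fm.subst_ren_congr (φ : Fm) {f g f' g' : ℕ → ℕ} (hf : ∀ x ∈ φ.fvarP, f x = f' x)
    (hg : ∀ u ∈ φ.fvarJ, g u = g' u) : φ.subst (ren f g) = φ.subst (ren f' g') := by
  induction φ generalizing f g f' g' with
  | pvar x => simp [Fm.subst, hf x (by simp [Fm.fvarP])]
  | pconst d => rfl
  | imp φ ψ ih₁ ih₂ | ideq φ ψ ih₁ ih₂ | ref φ ψ ih₁ ih₂ =>
    simp only [Fm.fvarP, Fm.fvarJ, Finset.mem_union] at hf hg
    simp only [Fm.subst, ih₁ (fun x hx => hf x (.inl hx)) (fun u hu => hg u (.inl hu)),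
      ih₂ (fun x hx => hf x (.inr hx)) (fun u hu => hg u (.inr hu))]
  | neg φ ih | isTrue φ ih | isFalse φ ih | box φ ih => simp only [Fm.subst, ih hf hg]
  | teq s t | tle s t =>
    simp only [Fm.fvarJ, Finset.mem_union] at hg
    simp only [Fm.subst, Tm.subst_ren_congr s (f' := f') fun u hu => hg u (.inl hu),
      Tm.subst_ren_congr t (f' := f') fun u hu => hg u (.inr hu)]
  | just φ t ih =>
    simp only [Fm.fvarJ, Finset.mem_union] at hg
    simp only [Fm.subst, ih hf fun u hu => hg u (.inl hu),
      Tm.subst_ren_congr t (f' := f') fun u hu => hg u (.inr hu)]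
  | fAll x χ ih =>
    have hy : pForced (ren f g) (.fAll x χ) = pForced (ren f' g') (.fAll x χ) := by
      rw [pForced_ren, pForced_ren, Finset.image_congr hf]
    simp only [Fm.subst, ren_updP, hy]
    congr 1
    refine ih (fun w hw => ?_) hg
    by_cases hwx : w = x
    · simp [hwx]
    · simpa [hwx] using hf w (by simp [Fm.fvarP, hwx, hw])
  | jAll u χ ih =>
    have hv : jForced (ren f g) (.jAll u χ) = jForced (ren f' g') (.jAll u χ) := by
      rw [jForced_ren, jForced_ren, Finset.image_congr hg]
    simp only [Fm.subst, ren_updJ, hv]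
    congr 1
    refine ih hf (fun w hw => ?_)
    by_cases hwu : w = u
    · simp [hwu]
    · simpa [hwu] using hg w (by simp [Fm.fvarJ, hwu, hw])

theorem Fm.subst_ren_ren (φ : Fm) (f g f' g' : ℕ → ℕ) :
    (φ.subst (ren f g)).subst (ren f' g') = φ.subst (ren (f' ∘ f) (g' ∘ g)) := by
  induction φ generalizing f g f' g' with
  | fAll x χ ih =>
    set y := pForced (ren f g) (.fAll x χ)
    have hy : ∀ b ∈ χ.fvarP.erase x, f b ≠ y := fun b hb => (lt_pForced_ren g hb).ne
    have hz : pForced (ren f' g') (.fAll y (χ.subst (ren (Function.update f x y) g)))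
        = pForced (ren (f' ∘ f) (g' ∘ g)) (.fAll x χ) := by
      simp only [pForced_ren, Fm.fvarP, Fm.fvarP_subst_ren, Finset.erase_image_update _ _ _ _ hy,
        Finset.image_image]
    simp only [Fm.subst, ren_updP]
    rw [hz, ih]
    congr 1
    refine Fm.subst_ren_congr _ (fun b hb => Function.update_comp_update_apply _ fun hbx => ?_)
      fun _ _ => rfl
    exact hy b (Finset.mem_erase.2 ⟨hbx, hb⟩)
  | jAll u χ ih =>
    set v := jForced (ren f g) (.jAll u χ)
    have hv : ∀ b ∈ χ.fvarJ.erase u, g b ≠ v := fun b hb => (lt_jForced_ren f hb).ne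
    have hz : jForced (ren f' g') (.jAll v (χ.subst (ren f (Function.update g u v))))
        = jForced (ren (f' ∘ f) (g' ∘ g)) (.jAll u χ) := by
      simp only [jForced_ren, Fm.fvarJ, Fm.fvarJ_subst_ren, Finset.erase_image_update _ _ _ _ hv,
        Finset.image_image]
    simp only [Fm.subst, ren_updJ]
    rw [hz, ih]
    congr 1
    refine Fm.subst_ren_congr _ (fun _ _ => rfl)
      fun b hb => Function.update_comp_update_apply _ fun hbu => ?_
    exact hv b (Finset.mem_erase.2 ⟨hbu, hb⟩)
  | _ => simp_all [Fm.subst, Tm.subst_ren_ren]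

theorem subst_id_updP_pvar (y x : ℕ) :
    Subst.id.updP y (.pvar x) = ren (Function.update id y x) id := by
  rw [subst_id_eq_ren, ren_updP]

theorem subst_id_updJ_var (v u : ℕ) :
    Subst.id.updJ v (.var u) = ren id (Function.update id v u) := by
  rw [subst_id_eq_ren, ren_updJ]

/-- Stated for renamings rather than for `Subst.id` alone: under a quantifier, `Fm.subst` renames
the bound variable to the forced one, so the induction hypothesis is needed for a renaming that is
the identity only on the free variables. -/
theorem alpha_subst_ren (φ : Fm) {f g : ℕ → ℕ} (hf : ∀ x ∈ φ.fvarP, f x = x)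
    (hg : ∀ u ∈ φ.fvarJ, g u = u) : Alpha φ (φ.subst (ren f g)) := by
  induction φ generalizing f g with
  | pvar x => simpa [Fm.subst, hf x (by simp [Fm.fvarP])] using Alpha.refl _
  | pconst d => exact Alpha.refl _
  | imp φ ψ ih₁ ih₂ | ideq φ ψ ih₁ ih₂ | ref φ ψ ih₁ ih₂ =>
    simp only [Fm.fvarP, Fm.fvarJ, Finset.mem_union] at hf hg
    first
    | apply Alpha.imp | apply Alpha.ideq | apply Alpha.ref
    · exact ih₁ (fun x hx => hf x (.inl hx)) (fun u hu => hg u (.inl hu))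
    · exact ih₂ (fun x hx => hf x (.inr hx)) (fun u hu => hg u (.inr hu))
  | neg φ ih => exact .neg (ih hf hg)
  | isTrue φ ih => exact .isTrue (ih hf hg)
  | isFalse φ ih => exact .isFalse (ih hf hg)
  | box φ ih => exact .box (ih hf hg)
  | teq s t | tle s t =>
    simp only [Fm.fvarJ, Finset.mem_union] at hg
    simpa [Fm.subst, Tm.subst_ren_eq_self s fun u hu => hg u (.inl hu),
      Tm.subst_ren_eq_self t fun u hu => hg u (.inr hu)] using Alpha.refl _
  | just φ t ih =>
    simp only [Fm.fvarJ, Finset.mem_union] at hg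
    simpa [Fm.subst, Tm.subst_ren_eq_self t fun u hu => hg u (.inr hu)]
      using Alpha.just t (ih hf fun u hu => hg u (.inl hu))
  | fAll x χ ih =>
    set y := pForced (ren f g) (.fAll x χ)
    have hy : ∀ b ∈ χ.fvarP.erase x, f b ≠ y := fun b hb => (lt_pForced_ren g hb).ne
    simp only [Fm.subst, ren_updP]
    refine Alpha.fAll ?_ fun hxy hx => ?_
    · rw [Fm.subst1P, subst_id_updP_pvar, Fm.subst_ren_ren]
      exact ih (fun b hb => Function.update_comp_update_eq_self hf hy hb) hg
    · exact Finset.notMem_image_update hf hxy (Fm.fvarP_subst_ren χ _ g ▸ hx)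
  | jAll u χ ih =>
    set v := jForced (ren f g) (.jAll u χ)
    have hv : ∀ b ∈ χ.fvarJ.erase u, g b ≠ v := fun b hb => (lt_jForced_ren f hb).ne
    simp only [Fm.subst, ren_updJ]
    refine Alpha.jAll ?_ fun huv hu => ?_
    · rw [Fm.subst1J, subst_id_updJ_var, Fm.subst_ren_ren]
      exact ih hf fun b hb => Function.update_comp_update_eq_self hg hv hb
    · exact Finset.notMem_image_update hg huv (Fm.fvarJ_subst_ren χ f _ ▸ hu)

theorem alpha_subst_id (φ : Fm) : Alpha φ (φ.subst Subst.id) :=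
  alpha_subst_ren φ (fun _ _ => rfl) fun _ _ => rfl

section Derivations

variable {Φ : Set Fm} {a b c : Fm}

theorem Deriv.of_taut (h : Taut a) : Deriv Φ a := .ax (.taut h)

theorem Deriv.mp_taut (hab : Taut (.imp a b)) (ha : Deriv Φ a) : Deriv Φ b :=
  .mp (.of_taut hab) ha

theorem Deriv.mp₂_taut (habc : Taut (.imp a (.imp b c))) (ha : Deriv Φ a) (hb : Deriv Φ b) :
    Deriv Φ c :=
  .mp (.mp_taut habc ha) hb

theorem Deriv.iff_mp (h : Deriv Φ (a.iff b)) : Deriv Φ (.imp a b) :=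
  .mp_taut (fun v => by grind [Fm.evalB, Fm.iff, Fm.and]) h

theorem Deriv.iff_mpr (h : Deriv Φ (a.iff b)) : Deriv Φ (.imp b a) :=
  .mp_taut (fun v => by grind [Fm.evalB, Fm.iff, Fm.and]) h

theorem Deriv.and_intro (ha : Deriv Φ a) (hb : Deriv Φ b) : Deriv Φ (a.and b) :=
  .mp₂_taut (fun v => by grind [Fm.evalB, Fm.and]) ha hb

theorem Deriv.imp_trans (hab : Deriv Φ (.imp a b)) (hbc : Deriv Φ (.imp b c)) :
    Deriv Φ (.imp a c) :=
  .mp₂_taut (fun v => by grind [Fm.evalB]) hab hbc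

theorem Deriv.imp_swap (h : Deriv Φ (.imp a (.imp b c))) : Deriv Φ (.imp b (.imp a c)) :=
  .mp_taut (fun v => by grind [Fm.evalB]) h

theorem Deriv.imp₂_trans {d : Fm} (h : Deriv Φ (.imp a (.imp b c))) (hcd : Deriv Φ (.imp c d)) :
    Deriv Φ (.imp a (.imp b d)) :=
  .mp₂_taut (fun v => by grind [Fm.evalB]) h hcd

theorem Deriv.bigAnd : ∀ {L : List Fm}, (∀ χ ∈ L, Deriv Φ χ) → Deriv Φ (bigAnd L)
  | [], _ => .of_taut fun v => by grind [EJ.bigAnd, Fm.evalB]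
  | [χ], h => h χ (List.mem_singleton_self χ)
  | χ :: ψ :: L, h => .and_intro (h χ (by simp)) (Deriv.bigAnd fun ρ hρ => h ρ (by simp [hρ]))

theorem Deriv.ideq_refl (φ : Fm) : Deriv Φ (.ideq φ φ) := .ax (.alphaAx (.refl φ))

theorem Deriv.tle_refl (s : Tm) : Deriv Φ (.tle s s) :=
  .mp (.iff_mpr (.ax (.leDef s s 0)))
    (.ax (.genP (.taut fun v => by grind [Fm.evalB]) (by simp [Fm.fvarP])))

theorem Deriv.teq_refl (s : Tm) : Deriv Φ (.teq s s) :=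
  .mp (.iff_mpr (.ax (.ext s s))) (.and_intro (.tle_refl s) (.tle_refl s))

theorem Deriv.ideq_subst {σ σ' : Subst} (φ : Fm)
    (hP : ∀ x ∈ φ.fvarP, Deriv Φ (.ideq (σ.pv x) (σ'.pv x)))
    (hJ : ∀ u ∈ φ.fvarJ, Deriv Φ (.teq (σ.jv u) (σ'.jv u))) :
    Deriv Φ (.ideq (φ.subst σ) (φ.subst σ')) := by
  refine .mp (.ax (.substP σ σ' φ)) (.bigAnd fun χ hχ => ?_)
  rcases List.mem_append.1 hχ with hχ | hχ
  · obtain ⟨x, hx, rfl⟩ := List.mem_map.1 hχ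
    exact hP x ((Finset.mem_sort _).1 hx)
  · obtain ⟨u, hu, rfl⟩ := List.mem_map.1 hχ
    exact hJ u ((Finset.mem_sort _).1 hu)

theorem Deriv.just_of_ideq (t : Tm) (h : Deriv Φ (.ideq a b)) :
    Deriv Φ (.imp (.just a t) (.just b t)) := by
  have hsubst : Deriv Φ (.ideq ((Fm.just (.pvar 0) t).subst (Subst.id.updP 0 a))
      ((Fm.just (.pvar 0) t).subst (Subst.id.updP 0 b))) :=
    .ideq_subst _ (fun x hx => by simp_all [Fm.fvarP, Subst.updP])
      fun u _ => .teq_refl (.var u)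
  simp only [Fm.subst, Tm.subst_eq_self t (σ := Subst.id.updP 0 _) rfl rfl] at hsubst
  exact .mp (.ax (.eqImp _ _)) (by simpa [Subst.updP] using hsubst)

theorem Deriv.jAll_intro_of_notMem {u : ℕ} (h : Deriv Φ a) (hu : u ∉ a.fvarJ) :
    Deriv Φ (.jAll u a) := by
  set e : Fm := .just (.pvar 0) (.var u)
  have he : u ∈ e.fvarJ := by simp [e, Fm.fvarJ, Tm.vars]
  -- `genJ` applies only to axioms in which `u` occurs free, so the trivial `e → e` stands in.
  have hee : Deriv Φ (.jAll u (.imp e e)) :=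
    .ax (.genJ (.taut fun v => by grind [Fm.evalB]) (by simp [Fm.fvarJ, he]))
  have heea : Deriv Φ (.jAll u (.imp (.imp e e) (.imp a a))) :=
    .ax (.genJ (.taut fun v => by grind [Fm.evalB]) (by simp [Fm.fvarJ, he]))
  have haa : Deriv Φ (.jAll u (.imp a a)) := .mp (.mp (.ax (.jDistrib _ _ u)) heea) hee
  exact .mp (.mp (.ax (.jVac a a u hu)) haa) h

theorem Deriv.ideq_subst1J_of_notMem (φ : Fm) {w : ℕ} (t : Tm) (hw : w ∉ φ.fvarJ) :
    Deriv Φ (.ideq (φ.subst Subst.id) (φ.subst1J w t)) :=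
  .ideq_subst φ (fun _ _ => .ideq_refl _) fun u hu => by
    have huw : u ≠ w := by rintro rfl; exact hw hu
    simpa [Subst.updJ, Subst.id, huw] using Deriv.teq_refl (Φ := Φ) (.var u)

theorem Deriv.just_imp_box (φ : Fm) (t : Tm) : Deriv Φ (.imp (.just φ t) (.box φ)) := by
  obtain ⟨w, hw⟩ := Infinite.exists_notMem_finset φ.fvarJ
  have hinst : Deriv Φ (.imp (.just (φ.subst1J w t) t) (Fm.jEx w (.just φ (.var w)))) := by
    simpa [Fm.subst1J, Fm.subst, Tm.subst, Subst.updJ] using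
      Deriv.ax (Φ := Φ) (.jExInst (.just φ (.var w)) w t)
  exact (Deriv.just_of_ideq t (.ax (.alphaAx (alpha_subst_id φ)))).imp_trans <|
    (Deriv.just_of_ideq t (.ideq_subst1J_of_notMem φ t hw)).imp_trans <|
    hinst.imp_trans (.iff_mpr (.ax (.necJust φ w hw)))

end Derivations

theorem Deriv.jAll_intro {a : Fm} (u : ℕ) (h : Deriv ∅ a) : Deriv ∅ (.jAll u a) := by
  induction h with
  | hyp h => exact absurd h (Set.notMem_empty _)
  | @ax a ha =>
    by_cases hu : u ∈ a.fvarJ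
    · exact .ax (.genJ ha hu)
    · exact (Deriv.ax ha).jAll_intro_of_notMem hu
  | mp _ _ ih₁ ih₂ => exact .mp (.mp (.ax (.jDistrib _ _ u)) ih₁) ih₂

theorem Deriv.jEx_imp_of_imp {a c : Fm} {u : ℕ} (h : Deriv ∅ (.imp a c)) (hu : u ∉ c.fvarJ) :
    Deriv ∅ (.imp (Fm.jEx u a) c) := by
  have hgen : Deriv ∅ (.jAll u (.imp (.neg c) (.neg a))) :=
    (Deriv.mp_taut (fun v => by grind [Fm.evalB]) h).jAll_intro u
  have hvac := Deriv.mp (.ax (.jVac (.neg a) (.neg c) u (by simpa [Fm.fvarJ] using hu))) hgen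
  exact .mp_taut (fun v => by grind [Fm.evalB, Fm.jEx]) hvac

theorem Deriv.box_K (ψ φ : Fm) : Deriv ∅ (.imp (.box (.imp ψ φ)) (.imp (.box ψ) (.box φ))) := by
  obtain ⟨u, hu⟩ := Infinite.exists_notMem_finset (ψ.fvarJ ∪ φ.fvarJ)
  obtain ⟨v, hv⟩ := Infinite.exists_notMem_finset (insert u (ψ.fvarJ ∪ φ.fvarJ))
  simp only [Finset.mem_insert, Finset.mem_union, not_or] at hu hv
  have happ : Deriv ∅ (.imp (.just (.imp ψ φ) (.var u)) (.imp (.just ψ (.var v)) (.box φ))) :=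
    (Deriv.ax (.appl ψ φ (.var u) (.var v))).imp₂_trans (.just_imp_box φ _)
  have hexu : Deriv ∅
      (.imp (Fm.jEx u (.just (.imp ψ φ) (.var u))) (.imp (.just ψ (.var v)) (.box φ))) :=
    happ.jEx_imp_of_imp (by simp [Fm.fvarJ, Tm.vars, hu, Ne.symm hv.1])
  have hexv : Deriv ∅ (.imp (Fm.jEx v (.just ψ (.var v)))
      (.imp (Fm.jEx u (.just (.imp ψ φ) (.var u))) (.box φ))) :=
    hexu.imp_swap.jEx_imp_of_imp (by simp [Fm.fvarJ, Fm.jEx, Tm.vars, hv])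
  have hnecu := Deriv.iff_mp (Φ := ∅) (.ax (.necJust (.imp ψ φ) u (by simp [Fm.fvarJ, hu])))
  have hnecv := Deriv.iff_mp (Φ := ∅) (.ax (.necJust ψ v hv.2.1))
  exact hnecu.imp_trans (hnecv.imp_trans hexv).imp_swap

theorem Deriv.toDeriv4 {Φ : Set Fm} {a : Fm} (h : Deriv Φ a) : Deriv4 Φ a := by
  induction h with
  | hyp h => exact .hyp h
  | ax h => exact .ax (.base h)
  | mp _ _ ih₁ ih₂ => exact .mp ih₁ ih₂

end EJ

/-- Necessitation is admissible in Ax + (4) + (AxNec). -/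
theorem necessitation (φ : EJ.Fm) (h : EJ.Deriv4 ∅ φ) :
    EJ.Deriv4 ∅ (.box φ) := by
  induction h with
  | hyp h => exact absurd h (Set.notMem_empty _)
  | ax h => exact .axnec h
  | axnec h => exact .mp (.ax (.four _)) (.axnec h)
  | mp _ _ ih₁ ih₂ => exact .mp (.mp (EJ.Deriv.box_K _ _).toDeriv4 ih₁) ih₂
end
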